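/- Let B be a Banach algebra and suppose {B_i}_{i ∈ I} is a directed family of closed subalgebras with dense union, and J ⊆ B is a closed two-sided ideal such that for each i, B_i ∩ J has finite codimension in B_i, with codimensions uniformly bounded by some N. Then J has finite codimension at most N in B. -/
import Mathlib


open Filter Topology

/-- If a Banach algebra `B` is the closure of a directed union of closed
subalgebras `A i`, and `J` is a closed two-sided ideal such that each `A i ∩ J` has
codimension at most `N` in `A i`, then `J` has codimension at most `N` in `B`. -/
theorem cofinite_of_directed_family
    {B : Type*} [NormedRing B] [NormedAlgebra ℂ B] [CompleteSpace B]
    {ι : Type*} [Nonempty ι] (A : ι → Subalgebra ℂ B)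
    (hAc : ∀ i, IsClosed ((A i : Set B)))
    (hdir : ∀ i j, ∃ k, A i ≤ A k ∧ A j ≤ A k)
    (hdense : Dense (⋃ i, (A i : Set B)))
    (J : Submodule ℂ B) (hJc : IsClosed (J : Set B))
    (hJ2 : ∀ a : B, ∀ x ∈ J, a * x ∈ J ∧ x * a ∈ J)
    (N : ℕ)
    (hcod : ∀ i, FiniteDimensional ℂ
        (↥(A i) ⧸ (Submodule.comap (A i).val.toLinearMap J)) ∧
      Module.finrank ℂ (↥(A i) ⧸ (Submodule.comap (A i).val.toLinearMap J)) ≤ N) :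
    FiniteDimensional ℂ (B ⧸ J) ∧ Module.finrank ℂ (B ⧸ J) ≤ N := by
  haveI : IsClosed (J : Set B) := hJc
  have hπcont : Continuous (J.mkQ : B → B ⧸ J) := by
    have h : LipschitzWith 1 (J.mkQ : B → B ⧸ J) :=
      LipschitzWith.of_dist_le_mul fun x y => by
        simpa [dist_eq_norm, ← map_sub] using Submodule.Quotient.norm_mk_le J (x - y)
    exact h.continuous
  -- Every `N+1`-tuple in `B ⧸ J` is linearly dependent.
  have key : ∀ v : Fin (N + 1) → B ⧸ J, ¬ LinearIndependent ℂ v := by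
    have hclosed : IsClosed {v : Fin (N + 1) → B ⧸ J | ¬ LinearIndependent ℂ v} := by
      have ho : IsOpen {v : Fin (N + 1) → B ⧸ J | LinearIndependent ℂ v} :=
        isOpen_setOf_linearIndependent
      simpa [Set.compl_setOf] using ho.isClosed_compl
    -- tuples with all coordinates in the image of the union are dense
    have hUdense : Dense ((J.mkQ : B → B ⧸ J) '' (⋃ i, (A i : Set B))) :=
      (J.mkQ_surjective.denseRange).dense_image hπcont hdense
    have hTdense : Dense (Set.pi Set.univ
        (fun _ : Fin (N + 1) => (J.mkQ : B → B ⧸ J) '' (⋃ i, (A i : Set B)))) :=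
      dense_pi Set.univ fun _ _ => hUdense
    -- such tuples are linearly dependent
    have hTS : Set.pi Set.univ
        (fun _ : Fin (N + 1) => (J.mkQ : B → B ⧸ J) '' (⋃ i, (A i : Set B))) ⊆
        {v : Fin (N + 1) → B ⧸ J | ¬ LinearIndependent ℂ v} := by
      intro v hv
      -- choose preimages
      choose w hw hπw using fun j => hv j (Set.mem_univ j)
      classical
      choose idx hidx using fun j => Set.mem_iUnion.mp (hw j)
      -- directedness: find a common k
      have hD : Directed (· ≤ ·) A := fun i j => hdir i j
      obtain ⟨k, hk⟩ := hD.finset_le (Finset.image idx Finset.univ)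
      have hwk : ∀ j, w j ∈ A k := fun j =>
        hk (idx j) (Finset.mem_image_of_mem idx (Finset.mem_univ j)) (hidx j)
      -- the map from A k to B ⧸ J
      set f : ↥(A k) →ₗ[ℂ] B ⧸ J := J.mkQ.comp (A k).val.toLinearMap with hf
      have hker : LinearMap.ker f = Submodule.comap (A k).val.toLinearMap J := by
        rw [hf, LinearMap.ker_comp, Submodule.ker_mkQ]
      obtain ⟨hfd, hfr⟩ := hcod k
      have hker_fd : FiniteDimensional ℂ (↥(A k) ⧸ LinearMap.ker f) := by
        rw [hker]; exact hfd
      haveI : FiniteDimensional ℂ (LinearMap.range f) :=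
        LinearEquiv.finiteDimensional f.quotKerEquivRange
      have hrange_le : Module.finrank ℂ (LinearMap.range f) ≤ N := by
        rw [← LinearEquiv.finrank_eq f.quotKerEquivRange]
        rw [hker] at hker_fd ⊢
        exact hfr
      intro hli
      have hmem : ∀ j, v j ∈ LinearMap.range f := fun j =>
        ⟨⟨w j, hwk j⟩, by simpa [hf] using hπw j⟩
      have hspan : Submodule.span ℂ (Set.range v) ≤ LinearMap.range f :=
        Submodule.span_le.mpr (Set.range_subset_iff.mpr hmem)
      have h1 : Module.finrank ℂ (Submodule.span ℂ (Set.range v)) = N + 1 := by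
        rw [finrank_span_eq_card hli, Fintype.card_fin]
      have h2 := Submodule.finrank_mono (R := ℂ) hspan
      omega
    intro v
    have : {u : Fin (N + 1) → B ⧸ J | ¬ LinearIndependent ℂ u} = Set.univ := by
      rw [← hclosed.closure_eq]
      exact Set.eq_univ_of_univ_subset ((hTdense.mono hTS).closure_eq ▸ le_refl _)
    exact (this ▸ Set.mem_univ v : v ∈ _)
  -- conclude the rank bound
  have hrank : Module.rank ℂ (B ⧸ J) ≤ (N : Cardinal) := by
    apply rank_le
    intro s hs
    by_contra hcard
    push_neg at hcard
    have hle : N + 1 ≤ Fintype.card s := by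
      simpa [Fintype.card_coe] using hcard
    obtain ⟨e⟩ := Function.Embedding.nonempty_of_card_le
      (by simpa [Fintype.card_fin] using hle : Fintype.card (Fin (N + 1)) ≤ Fintype.card s)
    exact key (fun j => (e j : B ⧸ J)) (hs.comp e e.injective)
  have hfd : FiniteDimensional ℂ (B ⧸ J) :=
    Module.rank_lt_aleph0_iff.mp (hrank.trans_lt (Cardinal.nat_lt_aleph0 N))
  exact ⟨hfd, Module.finrank_le_of_rank_le hrank⟩
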